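/- Let s, σ, η ∈ ℝ. Set u = cos σ·k − sin σ·j, h₀ = cos σ·j + sin σ·k, h = exp(η·u) * h₀ * exp(−η·u), q = exp(s·h), p = exp(s·h) * exp((−2η)·u) * exp(−s·h), and b = exp(s·h) * exp((−σ)·u) * i * exp(−s·h) (the earring parameterization of K_s from Lemma 7.3). Then: (1) re(b⁻¹ * q * i * q⁻¹) = cos σ; (2) re(p⁻¹ * p⁻¹) = cos(4η); (3) re(b⁻¹ * p⁻¹ * p⁻¹ * q * i * q⁻¹) = cos(σ + 4η). In particular, if 2η = −s·cos(σ + 2η), then re(p⁻¹ * p⁻¹) = cos(2s·cos(σ + 2η)). (The character computations in the proof of Proposition 7.6 of the paper for the earring tangle.) -/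

import Mathlib

open Quaternion

/-- The imaginary unit `i` of the quaternions. -/
noncomputable def qi : ℍ[ℝ] := ⟨0, 1, 0, 0⟩
/-- The imaginary unit `j` of the quaternions. -/
noncomputable def qj : ℍ[ℝ] := ⟨0, 0, 1, 0⟩
/-- The imaginary unit `k` of the quaternions. -/
noncomputable def qk : ℍ[ℝ] := ⟨0, 0, 0, 1⟩

/-!
Put `E = exp(s·h)` and `R t = exp(t·u)`. Then `p⁻¹ = E R(2η) E⁻¹` and `b⁻¹ = E i⁻¹ R(σ) E⁻¹`,
so the three words are the conjugates `(E i⁻¹) R(σ) (E i⁻¹)⁻¹`, `E R(4η) E⁻¹` and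
`(E i⁻¹) R(σ + 4η) (E i⁻¹)⁻¹`. The real part of a quaternion is invariant under conjugation, and
`re R(t) = cos t` because `u` is a purely imaginary unit quaternion.
-/

open NormedSpace

-- gives `NormedAlgebra ℚ ℍ[ℝ]` through `normedAlgebraRat`, as the lemmas on `exp` require
instance Quaternion.instCharZero {R : Type*} [CommRing R] [CharZero R] : CharZero ℍ[R] :=
  charZero_of_injective_algebraMap Quaternion.coe_injective

namespace Quaternion

theorem re_mul_comm {R : Type*} [CommRing R] (a b : ℍ[R]) : (a * b).re = (b * a).re := by
  simp only [re_mul]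
  ring

theorem re_mul_mul_inv {R : Type*} [Field R] [LinearOrder R] [IsStrictOrderedRing R]
    {a : ℍ[R]} (ha : a ≠ 0) (x : ℍ[R]) : (a * x * a⁻¹).re = x.re := by
  rw [re_mul_comm, ← mul_assoc, inv_mul_cancel₀ ha, one_mul]

theorem re_exp_smul {u : ℍ[ℝ]} (hre : u.re = 0) (hnorm : ‖u‖ = 1) (t : ℝ) :
    (exp (t • u)).re = Real.cos t := by
  simp [re_exp, hre, norm_smul, hnorm]

theorem exp_smul_mul_exp_smul (u : ℍ[ℝ]) (a c : ℝ) :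
    exp (a • u) * exp (c • u) = exp ((a + c) • u) := by
  rw [add_smul, exp_add_of_commute (((Commute.refl u).smul_left a).smul_right c)]

end Quaternion

@[simp] lemma qj_re : qj.re = 0 := rfl
@[simp] lemma qj_imI : qj.imI = 0 := rfl
@[simp] lemma qj_imJ : qj.imJ = 1 := rfl
@[simp] lemma qj_imK : qj.imK = 0 := rfl
@[simp] lemma qk_re : qk.re = 0 := rfl
@[simp] lemma qk_imI : qk.imI = 0 := rfl
@[simp] lemma qk_imJ : qk.imJ = 0 := rfl
@[simp] lemma qk_imK : qk.imK = 1 := rfl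

lemma qi_ne_zero : qi ≠ 0 := fun h => one_ne_zero (congrArg (·.imI) h)

lemma norm_cos_smul_qk_sub_sin_smul_qj (σ : ℝ) :
    ‖Real.cos σ • qk - Real.sin σ • qj‖ = 1 := by
  rw [← pow_eq_one_iff_of_nonneg (norm_nonneg _) two_ne_zero, sq, ← normSq_eq_norm_mul_self]
  simp [normSq_def']

theorem earring_character_computation_general (s σ η : ℝ)
    (u h q p b : ℍ[ℝ])
    (hu : u = Real.cos σ • qk - Real.sin σ • qj)
    (hq : q = NormedSpace.exp (s • h))
    (hp : p = NormedSpace.exp (s • h) * NormedSpace.exp ((-(2 * η)) • u) *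
      NormedSpace.exp ((-s) • h))
    (hb : b = NormedSpace.exp (s • h) * NormedSpace.exp ((-σ) • u) * qi *
      NormedSpace.exp ((-s) • h)) :
    (b⁻¹ * q * qi * q⁻¹).re = Real.cos σ ∧
    (p⁻¹ * p⁻¹).re = Real.cos (4 * η) ∧
    (b⁻¹ * p⁻¹ * p⁻¹ * q * qi * q⁻¹).re = Real.cos (σ + 4 * η) ∧
    (2 * η = -s * Real.cos (σ + 2 * η) →
      (p⁻¹ * p⁻¹).re = Real.cos (2 * s * Real.cos (σ + 2 * η))) := by
  have hu_re : u.re = 0 := by simp [hu]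
  have hu_norm : ‖u‖ = 1 := hu ▸ norm_cos_smul_qk_sub_sin_smul_qj σ
  simp only [neg_smul, exp_neg] at hp hb
  set E := exp (s • h)
  have hE : E ≠ 0 := (isUnit_exp _).ne_zero
  have hEqi : E * qi⁻¹ ≠ 0 := mul_ne_zero hE (inv_ne_zero qi_ne_zero)
  have hp_inv : p⁻¹ = E * exp ((2 * η) • u) * E⁻¹ := by
    simp only [hp, mul_inv_rev, inv_inv, mul_assoc]
  have hb_inv : b⁻¹ = E * qi⁻¹ * exp (σ • u) * E⁻¹ := by
    simp only [hb, mul_inv_rev, inv_inv, mul_assoc]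
  have hbq : b⁻¹ * q * qi * q⁻¹ = (E * qi⁻¹) * exp (σ • u) * (E * qi⁻¹)⁻¹ := by
    simp only [hb_inv, hq, mul_inv_rev, inv_inv, mul_assoc, inv_mul_cancel_left₀ hE]
  have hpp : p⁻¹ * p⁻¹ = E * exp ((4 * η) • u) * E⁻¹ := by
    rw [hp_inv, show 4 * η = 2 * η + 2 * η by ring, ← exp_smul_mul_exp_smul]
    simp only [mul_assoc, inv_mul_cancel_left₀ hE]
  have hbppq : b⁻¹ * p⁻¹ * p⁻¹ * q * qi * q⁻¹ =
      (E * qi⁻¹) * exp ((σ + 4 * η) • u) * (E * qi⁻¹)⁻¹ := by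
    rw [mul_assoc b⁻¹, hpp, hb_inv, hq, ← exp_smul_mul_exp_smul]
    simp only [mul_inv_rev, inv_inv, mul_assoc, inv_mul_cancel_left₀ hE]
  have hpp_re : (p⁻¹ * p⁻¹).re = Real.cos (4 * η) := by
    rw [hpp, re_mul_mul_inv hE, re_exp_smul hu_re hu_norm]
  refine ⟨?_, hpp_re, ?_, fun hcrit => ?_⟩
  · rw [hbq, re_mul_mul_inv hEqi, re_exp_smul hu_re hu_norm]
  · rw [hbppq, re_mul_mul_inv hEqi, re_exp_smul hu_re hu_norm]
  · rw [hpp_re, show 4 * η = -(2 * s * Real.cos (σ + 2 * η)) by linarith, Real.cos_neg]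

/-- The character computations in the proof of Proposition 7.6 of the paper for the earring
tangle: along the parameterization of `K_s`, the three pillowcase characters are
`(cos σ, cos(4η), cos(σ + 4η))`; in particular, if `2η = −s·cos(σ + 2η)`, then
`re(p̄²) = cos(2s·cos(σ + 2η))`. -/
theorem earring_character_computation (s σ η : ℝ)
    (u h₀ h q p b : ℍ[ℝ])
    (hu : u = Real.cos σ • qk - Real.sin σ • qj)
    (hh₀ : h₀ = Real.cos σ • qj + Real.sin σ • qk)
    (hh : h = NormedSpace.exp (η • u) * h₀ * NormedSpace.exp ((-η) • u))
    (hq : q = NormedSpace.exp (s • h))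
    (hp : p = NormedSpace.exp (s • h) * NormedSpace.exp ((-(2 * η)) • u) *
      NormedSpace.exp ((-s) • h))
    (hb : b = NormedSpace.exp (s • h) * NormedSpace.exp ((-σ) • u) * qi *
      NormedSpace.exp ((-s) • h)) :
    (b⁻¹ * q * qi * q⁻¹).re = Real.cos σ ∧
    (p⁻¹ * p⁻¹).re = Real.cos (4 * η) ∧
    (b⁻¹ * p⁻¹ * p⁻¹ * q * qi * q⁻¹).re = Real.cos (σ + 4 * η) ∧
    (2 * η = -s * Real.cos (σ + 2 * η) →
      (p⁻¹ * p⁻¹).re = Real.cos (2 * s * Real.cos (σ + 2 * η))) :=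
  earring_character_computation_general s σ η u h q p b hu hq hp hb
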